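/- arXiv:2308.07602 — 4 statements merged into one kernel-verified Lean document; each statement's English description precedes it below -/
import Mathlib

section
/- Let T : V → V be a linear operator on a finite-dimensional complex vector space such that the trajectory t ↦ exp(tT)v is bounded on [0,∞) for every v in some spanning set of V. Then every eigenvalue of T has nonpositive real part, and for every eigenvalue λ with Re λ = 0, the generalized eigenspace of λ equals the eigenspace of λ. -/
/-!
On a vector `u` with `(T - μ) u = w` and `(T - μ) w = 0` the exponential is explicit:
`exp (t T) u = e^{tμ} (u + t w)`. The vectors with bounded trajectories form a subspace, so they
are all of `V`. Taking `w = 0` shows `Re μ ≤ 0`; if `Re μ = 0` then `‖u + t w‖` stays bounded, so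
`w = 0`. Thus `ker (T - μ)² = ker (T - μ)`, and the chain of kernels `ker (T - μ)^k` stops there.
-/

open Filter Module

namespace Module.End

variable {R M : Type*} [CommRing R] [AddCommGroup M] [Module R M]

theorem maxGenEigenspace_eq_eigenspace_of_genEigenspace_two_le {f : End R M} {μ : R}
    (h : f.genEigenspace μ 2 ≤ f.eigenspace μ) : f.maxGenEigenspace μ = f.eigenspace μ := by
  have h' (y : M) (hy : (f - μ • 1) ((f - μ • 1) y) = 0) : (f - μ • 1) y = 0 := by
    simpa [eigenspace, genEigenspace_one] using
      @h y (mem_genEigenspace.2 ⟨2, le_rfl, by rwa [LinearMap.mem_ker, pow_two]⟩)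
  refine le_antisymm (fun x hx => ?_) eigenspace_le_maxGenEigenspace
  obtain ⟨k, hk⟩ := (mem_maxGenEigenspace f μ x).1 hx
  rw [eigenspace, genEigenspace_one, LinearMap.mem_ker]
  clear hx
  induction k generalizing x with
  | zero => simp_all
  | succ k ih => exact h' x (ih _ (by rwa [pow_succ, mul_apply] at hk))

end Module.End

theorem eq_zero_of_isBoundedUnder_norm_add_smul {E : Type*} [NormedAddCommGroup E]
    [NormedSpace ℝ E] {u w : E} (h : IsBoundedUnder (· ≤ ·) atTop fun t : ℝ => ‖u + t • w‖) :
    w = 0 := by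
  by_contra hw
  refine not_isBoundedUnder_of_tendsto_atTop ?_ h
  refine tendsto_atTop_mono' _ ?_
    ((tendsto_id.atTop_mul_const (norm_pos_iff.2 hw)).atTop_add (tendsto_const_nhds (x := -‖u‖)))
  filter_upwards [eventually_ge_atTop 0] with t ht
  calc t * ‖w‖ + -‖u‖ = ‖(u + t • w) - u‖ - ‖u‖ := by
        rw [add_sub_cancel_left, norm_smul, Real.norm_of_nonneg ht]; ring
    _ ≤ ‖u + t • w‖ := by linarith [norm_sub_le (u + t • w) u]

namespace ContinuousLinearMap

variable {V : Type*} [NormedAddCommGroup V] [NormedSpace ℂ V]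

def boundedTrajectories (T : V →L[ℂ] V) : Submodule ℂ V where
  carrier := {v | ∃ C : ℝ, ∀ t : ℝ, 0 ≤ t → ‖NormedSpace.exp (t • T) v‖ ≤ C}
  add_mem' := by
    rintro x y ⟨C, hC⟩ ⟨D, hD⟩
    refine ⟨C + D, fun t ht => ?_⟩
    rw [map_add]
    exact (norm_add_le _ _).trans (add_le_add (hC t ht) (hD t ht))
  zero_mem' := ⟨0, fun t _ => by simp⟩
  smul_mem' := by
    rintro a x ⟨C, hC⟩
    refine ⟨‖a‖ * C, fun t ht => ?_⟩
    rw [map_smul, norm_smul]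
    exact mul_le_mul_of_nonneg_left (hC t ht) (norm_nonneg a)

theorem isBoundedUnder_norm_exp_smul_apply {T : V →L[ℂ] V} {v : V}
    (hv : v ∈ T.boundedTrajectories) :
    IsBoundedUnder (· ≤ ·) atTop fun t : ℝ => ‖NormedSpace.exp (t • T) v‖ :=
  let ⟨C, hC⟩ := hv
  ⟨C, eventually_map.2 ((eventually_ge_atTop 0).mono hC)⟩

variable [CompleteSpace V]

theorem exp_apply_eq_add_of_apply_apply_eq_zero {N : V →L[ℂ] V} {u : V} (hu : N (N u) = 0) :
    NormedSpace.exp N u = u + N u := by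
  have hsum := (NormedSpace.exp_series_hasSum_exp' (𝕂 := ℂ) N).mapL (apply ℂ V u)
  refine hsum.unique (hasSum_sum_of_ne_finset_zero (s := Finset.range 2) fun n hn => ?_) |>.trans ?_
  · obtain ⟨m, rfl⟩ := Nat.exists_eq_add_of_le' (not_lt.1 (Finset.mem_range.not.1 hn))
    simp [pow_succ, hu]
  · simp [Finset.sum_range_succ]

variable {T : V →L[ℂ] V} {μ : ℂ}

theorem exp_smul_apply_of_apply_eq {u w : V} (hu : T u = μ • u + w) (hw : T w = μ • w) (z : ℂ) :
    NormedSpace.exp (z • T) u = Complex.exp (z * μ) • (u + z • w) := by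
  have hsplit : z • T = algebraMap ℂ _ (z * μ) + z • (T - μ • 1) := by
    rw [Algebra.algebraMap_eq_smul_one, smul_sub, smul_smul]; abel
  have hN : (z • (T - μ • 1)) u = z • w := by simp [hu]
  have hball (x : V →L[ℂ] V) : x ∈ Metric.eball 0 (NormedSpace.expSeries ℂ (V →L[ℂ] V)).radius :=
    (NormedSpace.expSeries_radius_eq_top ℂ (V →L[ℂ] V)).symm ▸ edist_lt_top _ _
  rw [hsplit, NormedSpace.exp_add_of_commute_of_mem_ball (𝕂 := ℂ) (Algebra.commutes _ _)
      (hball _) (hball _), ← NormedSpace.algebraMap_exp_comm (𝔸 := V →L[ℂ] V), mul_apply_eq_comp,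
    exp_apply_eq_add_of_apply_apply_eq_zero (by simp [hN, hw]), hN, ← Complex.exp_eq_exp_ℂ,
    Algebra.algebraMap_eq_smul_one]
  rfl

theorem norm_exp_smul_apply_of_apply_eq {u w : V} (hu : T u = μ • u + w) (hw : T w = μ • w)
    (t : ℝ) : ‖NormedSpace.exp (t • T) u‖ = Real.exp (t * μ.re) * ‖u + t • w‖ := by
  rw [← Complex.coe_smul, exp_smul_apply_of_apply_eq hu hw, norm_smul, Complex.norm_exp,
    Complex.re_ofReal_mul, Complex.coe_smul]

theorem re_nonpos_of_apply_eq_smul {v : V} (hv0 : v ≠ 0) (hTv : T v = μ • v)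
    (hv : v ∈ T.boundedTrajectories) : μ.re ≤ 0 := by
  by_contra! hre
  refine not_isBoundedUnder_of_tendsto_atTop ?_ (isBoundedUnder_norm_exp_smul_apply hv)
  simp_rw [norm_exp_smul_apply_of_apply_eq (u := v) (w := 0) (by rwa [add_zero]) (by simp),
    smul_zero, add_zero]
  exact (Real.tendsto_exp_atTop.comp (tendsto_id.atTop_mul_const hre)).atTop_mul_const
    (norm_pos_iff.2 hv0)

theorem genEigenspace_two_le_eigenspace_of_re_eq_zero (hT : T.boundedTrajectories = ⊤)
    (hre : μ.re = 0) : End.genEigenspace (T : End ℂ V) μ 2 ≤ End.eigenspace (T : End ℂ V) μ := by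
  intro u hu
  set w := ((T : End ℂ V) - μ • 1) u
  have hw : T w = μ • w := by
    have h2 : ((T : End ℂ V) - μ • 1) w = 0 := by
      rw [← End.mul_apply, ← pow_two]
      exact End.mem_genEigenspace_nat.1 hu
    simpa [sub_eq_zero] using h2
  have hTu : T u = μ • u + w := by simp [w]
  have hbdd := isBoundedUnder_norm_exp_smul_apply (hT ▸ Submodule.mem_top : u ∈ _)
  simp_rw [norm_exp_smul_apply_of_apply_eq hTu hw, hre, mul_zero, Real.exp_zero, one_mul] at hbdd
  rw [End.mem_eigenspace_iff, coe_coe, hTu, eq_zero_of_isBoundedUnder_norm_add_smul hbdd,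
    add_zero]

end ContinuousLinearMap

/-- If every trajectory `t ↦ exp(tT) v`, for `v` in some spanning set, is bounded on
`[0, ∞)`, then all eigenvalues of `T` have nonpositive real part and the generalized
eigenspace of every eigenvalue on the imaginary axis equals its eigenspace. -/
theorem spectrum_of_bounded_trajectories
    {V : Type*} [NormedAddCommGroup V] [NormedSpace ℂ V] [FiniteDimensional ℂ V]
    (T : V →L[ℂ] V) (s : Set V) (hspan : Submodule.span ℂ s = ⊤)
    (hbdd : ∀ v ∈ s, ∃ C : ℝ, ∀ t : ℝ, 0 ≤ t → ‖NormedSpace.exp (t • T) v‖ ≤ C) :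
    (∀ μ : ℂ, Module.End.HasEigenvalue (T : V →ₗ[ℂ] V) μ → μ.re ≤ 0) ∧
      (∀ μ : ℂ, μ.re = 0 →
        Module.End.maxGenEigenspace (T : V →ₗ[ℂ] V) μ
          = Module.End.eigenspace (T : V →ₗ[ℂ] V) μ) := by
  have hT : T.boundedTrajectories = ⊤ := eq_top_iff.2 (hspan ▸ Submodule.span_le.2 hbdd)
  refine ⟨fun μ hμ => ?_, fun μ hre => ?_⟩
  · obtain ⟨v, hv⟩ := hμ.exists_hasEigenvector
    exact T.re_nonpos_of_apply_eq_smul hv.2 hv.apply_eq_smul (hT ▸ Submodule.mem_top)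
  · exact End.maxGenEigenspace_eq_eigenspace_of_genEigenspace_two_le
      (T.genEigenspace_two_le_eigenspace_of_re_eq_zero hT hre)
end

section
/- Let T : V → V be a linear operator on a finite-dimensional complex inner product space whose eigenvalues all have nonpositive real part and which is semisimple on the imaginary-axis spectrum (ker(T−λ)² = ker(T−λ) for Re λ = 0). Let v₀ ∈ V and suppose exp(tT)v₀ converges to some limit w as t → +∞. Then T(w) = 0, and ⟨u, v₀⟩ = ⟨u, w⟩ for every eigenvector u of the adjoint T* corresponding to an eigenvalue with zero real part. -/
/-!
Shifting time shows that the limit `w` of the orbit is fixed by every `exp (s • T)`;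
differentiating `s ↦ exp (s • T) w` at `0` gives `T w = 0`. For an eigenvector `u` of `T*`
with eigenvalue `μ`, `⟪u, exp (t • T) v₀⟫ = exp (t μ̄) ⟪u, v₀⟫` has constant modulus when
`Re μ = 0`, and its limit `⟪u, w⟫` is annihilated by `μ̄` because `⟪T* u, w⟫ = ⟪u, T w⟫ = 0`.
So either `μ = 0` and the pairing is constant in `t`, or `⟪u, w⟫ = 0` and then `⟪u, v₀⟫ = 0`.
-/

open Filter Module
open Topology NormedSpace ComplexConjugate

section Orbit
variable {E : Type*} [NormedAddCommGroup E] [NormedSpace ℂ E] [CompleteSpace E]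

theorem exp_smul_apply_eq_of_tendsto {A : E →L[ℂ] E} {x y : E}
    (h : Tendsto (fun t : ℝ => exp (t • A) x) atTop (𝓝 y)) (s : ℝ) :
    exp (s • A) y = y := by
  let +nondep : NormedAlgebra ℚ (E →L[ℂ] E) := .restrictScalars ℚ ℂ (E →L[ℂ] E)
  have hshift : Tendsto (fun t : ℝ => exp ((t + s) • A) x) atTop (𝓝 y) :=
    h.comp (tendsto_atTop_add_const_right atTop s tendsto_id)
  have hsplit (t : ℝ) : exp ((t + s) • A) x = exp (s • A) (exp (t • A) x) := by
    rw [add_comm, add_smul, exp_add_of_commute ((Commute.refl A).smul_left s |>.smul_right t)]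
    rfl
  exact tendsto_nhds_unique (((exp (s • A)).continuous.tendsto y).comp h)
    (hshift.congr hsplit)

theorem apply_eq_zero_of_tendsto_exp_smul_apply {A : E →L[ℂ] E} {x y : E}
    (h : Tendsto (fun t : ℝ => exp (t • A) x) atTop (𝓝 y)) : A y = 0 := by
  have hderiv : HasDerivAt (fun s : ℝ => exp (s • A) y) (A y) 0 := by
    simpa [Function.comp_def] using
      ((ContinuousLinearMap.apply ℂ E y).restrictScalars ℝ).hasFDerivAt.comp_hasDerivAt 0
        (hasDerivAt_exp_smul_const (𝕂 := ℝ) A 0)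
  have hconst : (fun s : ℝ => exp (s • A) y) = fun _ => y :=
    funext (exp_smul_apply_eq_of_tendsto h)
  rw [hconst] at hderiv
  exact hderiv.unique (hasDerivAt_const 0 y)

end Orbit

theorem exp_apply_of_apply_eq_smul {𝕜 E : Type*} [RCLike 𝕜] [NormedAddCommGroup E]
    [NormedSpace 𝕜 E] [CompleteSpace E] {A : E →L[𝕜] E} {μ : 𝕜} {u : E} (h : A u = μ • u) :
    exp A u = exp μ • u := by
  have hpow (n : ℕ) : (A ^ n) u = μ ^ n • u := by
    induction n with
    | zero => simp
    | succ n ih => rw [pow_succ', mul_apply_eq_comp, ih, map_smul, h, smul_smul, pow_succ]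
  calc exp A u = ∑' n, ((n.factorial : 𝕜)⁻¹ • A ^ n) u := by
        rw [exp_eq_tsum 𝕜]
        exact (ContinuousLinearMap.apply 𝕜 E u).map_tsum (expSeries_summable' A)
    _ = ∑' n, ((n.factorial : 𝕜)⁻¹ • μ ^ n) • u := by
        simp only [smul_apply, hpow, smul_smul, smul_eq_mul]
    _ = exp μ • u := by rw [(expSeries_summable' μ).tsum_smul_const, exp_eq_tsum 𝕜]

theorem inner_exp_smul_apply_of_adjoint_apply_eq_smul {V : Type*} [NormedAddCommGroup V]
    [InnerProductSpace ℂ V] [CompleteSpace V] {A : V →L[ℂ] V} {μ : ℂ} {u : V}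
    (h : ContinuousLinearMap.adjoint A u = μ • u) (t : ℝ) (v : V) :
    inner ℂ u (exp (t • A) v) = Complex.exp (t * conj μ) * inner ℂ u v := by
  have hexp : ContinuousLinearMap.adjoint (exp (t • A)) =
      exp (t • ContinuousLinearMap.adjoint A) := by
    rw [← ContinuousLinearMap.star_eq_adjoint, star_exp, star_smul, star_trivial,
      ContinuousLinearMap.star_eq_adjoint]
  have htA : (t • ContinuousLinearMap.adjoint A) u = ((t : ℂ) * μ) • u := by
    rw [smul_apply, h, ← smul_smul, Complex.coe_smul]
  rw [← ContinuousLinearMap.adjoint_inner_left, hexp, exp_apply_of_apply_eq_smul htA,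
    ← Complex.exp_eq_exp_ℂ, inner_smul_left, ← Complex.exp_conj, map_mul, Complex.conj_ofReal]

theorem eq_of_tendsto_cexp_mul_of_re_eq_zero {ν c L : ℂ} (hre : ν.re = 0) (hL : ν * L = 0)
    (h : Tendsto (fun t : ℝ => Complex.exp (t * ν) * c) atTop (𝓝 L)) : c = L := by
  rcases eq_or_ne ν 0 with rfl | hν
  · simpa using h
  · have hL0 : L = 0 := (mul_eq_zero.mp hL).resolve_left hν
    subst hL0
    have hnorm : Tendsto (fun _ : ℝ => ‖c‖) atTop (𝓝 0) := by
      simpa [Complex.norm_exp, hre] using h.norm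
    exact norm_eq_zero.mp (tendsto_nhds_unique tendsto_const_nhds hnorm)

theorem limit_fixed_and_pairing_general
    {V : Type*} [NormedAddCommGroup V] [InnerProductSpace ℂ V] [FiniteDimensional ℂ V]
    (T : V →L[ℂ] V)
    (v₀ w : V)
    (hconv : Tendsto (fun t : ℝ => NormedSpace.exp (t • T) v₀) atTop (nhds w)) :
    T w = 0 ∧
      ∀ (μ : ℂ) (u : V), Module.End.HasEigenvector
          ((ContinuousLinearMap.adjoint T : V →L[ℂ] V) : V →ₗ[ℂ] V) μ u →
        μ.re = 0 → (inner ℂ u v₀ : ℂ) = inner ℂ u w := by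
  have hTw : T w = 0 := apply_eq_zero_of_tendsto_exp_smul_apply hconv
  refine ⟨hTw, fun μ u hu hμ => ?_⟩
  have hTu : ContinuousLinearMap.adjoint T u = μ • u := hu.apply_eq_smul
  have hlim : Tendsto (fun t : ℝ => Complex.exp (t * conj μ) * inner ℂ u v₀) atTop
      (𝓝 (inner ℂ u w)) :=
    (tendsto_const_nhds.inner hconv).congr
      (inner_exp_smul_apply_of_adjoint_apply_eq_smul hTu · v₀)
  have hkill : conj μ * inner ℂ u w = 0 := by
    rw [← inner_smul_left, ← hTu, ContinuousLinearMap.adjoint_inner_left, hTw, inner_zero_right]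
  exact eq_of_tendsto_cexp_mul_of_re_eq_zero (by simpa using hμ) hkill hlim

/-- If `exp(tT) v₀ → w`, where all eigenvalues of `T` have nonpositive real part and `T`
is semisimple on the imaginary-axis spectrum, then `w` is a fixed point of `T` and
`⟪u, v₀⟫ = ⟪u, w⟫` for every eigenvector `u` of `T*` whose eigenvalue has zero real part. -/
theorem limit_fixed_and_pairing
    {V : Type*} [NormedAddCommGroup V] [InnerProductSpace ℂ V] [FiniteDimensional ℂ V]
    (T : V →L[ℂ] V)
    (hspec : ∀ μ : ℂ, Module.End.HasEigenvalue (T : V →ₗ[ℂ] V) μ → μ.re ≤ 0)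
    (hsemi : ∀ μ : ℂ, μ.re = 0 →
      LinearMap.ker (((T : V →ₗ[ℂ] V) - μ • 1) ^ 2) = LinearMap.ker ((T : V →ₗ[ℂ] V) - μ • 1))
    (v₀ w : V)
    (hconv : Tendsto (fun t : ℝ => NormedSpace.exp (t • T) v₀) atTop (nhds w)) :
    T w = 0 ∧
      ∀ (μ : ℂ) (u : V), Module.End.HasEigenvector
          ((ContinuousLinearMap.adjoint T : V →L[ℂ] V) : V →ₗ[ℂ] V) μ u →
        μ.re = 0 → (inner ℂ u v₀ : ℂ) = inner ℂ u w :=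
  limit_fixed_and_pairing_general T v₀ w hconv
end

section
/- Let T be a linear operator on a finite-dimensional complex inner product space with all eigenvalues having nonpositive real part and no nontrivial Jordan blocks for imaginary-axis eigenvalues. Let w satisfy T(w) = 0. Then for v₀ ∈ V, exp(tT)v₀ → w as t → +∞ if and only if ⟨u, v₀⟩ = ⟨u, w⟩ for every eigenvector u of T* whose eigenvalue has zero real part. -/
/-!
Pairing with an eigenvector `u` of `T*` for the eigenvalue `μ` turns `exp (t T)` into
multiplication by `exp (t μ̄)`, which has modulus one when `Re μ = 0`; so `⟪u, v₀ - w⟫` is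
constant along the flow and must vanish if the flow converges to `w`.

Conversely, split `v₀ - w` into generalized eigenvectors of `T`. Those for eigenvalues with
`Re λ < 0` decay like a polynomial times `exp (t Re λ)`. A component `y` for an eigenvalue on
the imaginary axis is a genuine eigenvector, since the Jordan blocks there are trivial. The other
components are orthogonal to `ker (T* - λ̄)`, so the pairing hypothesis makes `y` orthogonal to
it too, i.e. `y ∈ range (T - λ)`. Then `y = (T - λ) g` with `(T - λ)² g = 0`, and
`ker (T - λ)² = ker (T - λ)` forces `y = 0`.
-/

open Filter Module

open Finset NormedSpace ComplexConjugate Topology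
open scoped InnerProduct InnerProductSpace Nat Complex

section Exponential

variable {𝕂 E : Type*} [RCLike 𝕂] [NormedAddCommGroup E] [NormedSpace 𝕂 E]
  [CompleteSpace E]

theorem hasSum_exp_apply (B : E →L[𝕂] E) (y : E) :
    HasSum (fun n => (n !⁻¹ : 𝕂) • (B ^ n) y) (exp B y) :=
  (exp_series_hasSum_exp' (𝕂 := 𝕂) B).mapL (ContinuousLinearMap.apply 𝕂 E y)

theorem exp_apply_eq_sum_of_pow_apply_eq_zero {B : E →L[𝕂] E} {y : E} {k : ℕ}
    (hk : (B ^ k) y = 0) : exp B y = ∑ n ∈ range k, (n !⁻¹ : 𝕂) • (B ^ n) y := by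
  refine (hasSum_exp_apply B y).unique (hasSum_sum_of_ne_finset_zero fun n hn => ?_)
  obtain ⟨m, rfl⟩ := Nat.exists_eq_add_of_le (not_lt.mp (mem_range.not.mp hn))
  rw [add_comm, pow_add, mul_apply_eq_comp, hk, map_zero, smul_zero]

theorem exp_apply_of_apply_eq_zero {B : E →L[𝕂] E} {y : E} (hy : B y = 0) : exp B y = y := by
  simpa using exp_apply_eq_sum_of_pow_apply_eq_zero (𝕂 := 𝕂) (k := 1) (by simpa using hy)

theorem exp_apply_of_apply_eq_smul_s7 {B : E →L[𝕂] E} {y : E} {c : 𝕂} (hy : B y = c • y) :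
    exp B y = exp c • y := by
  have hpow (n : ℕ) : (B ^ n) y = c ^ n • y := by
    induction n with
    | zero => simp
    | succ n ih => rw [pow_succ', mul_apply_eq_comp, ih, map_smul, hy, smul_smul, pow_succ]
  refine (hasSum_exp_apply B y).unique ?_
  simpa only [hpow, smul_smul, smul_eq_mul] using
    (exp_series_hasSum_exp' (𝕂 := 𝕂) c).smul_const y

end Exponential

theorem tendsto_cexp_mul_mul_pow_atTop {l : ℂ} (hl : l.re < 0) (n : ℕ) :
    Tendsto (fun t : ℝ => cexp (t * l) * (t : ℂ) ^ n) atTop (𝓝 0) := by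
  rw [tendsto_zero_iff_norm_tendsto_zero]
  refine (tendsto_rpow_mul_exp_neg_mul_atTop_nhds_zero n (-l.re) (by linarith)).congr' ?_
  filter_upwards [eventually_ge_atTop 0] with t ht
  simp [Complex.norm_exp, abs_of_nonneg ht, mul_comm]

theorem tendsto_exp_smul_apply_of_mem_maxGenEigenspace {E : Type*} [NormedAddCommGroup E]
    [NormedSpace ℂ E] [CompleteSpace E] {T : E →L[ℂ] E} {l : ℂ} (hl : l.re < 0) {y : E}
    (hy : y ∈ End.maxGenEigenspace (T : E →ₗ[ℂ] E) l) :
    Tendsto (fun t : ℝ => exp (t • T) y) atTop (𝓝 0) := by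
  obtain ⟨k, hk⟩ := (End.mem_maxGenEigenspace _ _ _).mp hy
  set N : E →L[ℂ] E := T - l • 1
  have hNk : (N ^ k) y = 0 := by
    rw [← ContinuousLinearMap.coe_coe, ContinuousLinearMap.toLinearMap_pow]
    exact hk
  have hexp (t : ℝ) : exp (t • T) y =
      ∑ n ∈ range k, (cexp (t * l) * (t : ℂ) ^ n) • ((n !⁻¹ : ℂ) • (N ^ n) y) := by
    have hsplit : t • T = algebraMap ℂ (E →L[ℂ] E) (t * l) + t • N := by
      simp [N, Algebra.algebraMap_eq_smul_one, smul_sub, mul_smul]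
    -- `exp_add_of_commute` would need an `Algebra ℚ (E →L[ℂ] E)` instance, which is not there.
    have hball (B : E →L[ℂ] E) : B ∈ Metric.eball 0 (expSeries ℂ (E →L[ℂ] E)).radius := by
      simp [expSeries_radius_eq_top]
    rw [hsplit, exp_add_of_commute_of_mem_ball (Algebra.commutes _ _) (hball _) (hball _),
      ← algebraMap_exp_comm, mul_apply_eq_comp,
      exp_apply_eq_sum_of_pow_apply_eq_zero (k := k)
        (by rw [smul_pow, smul_apply, hNk, smul_zero]),
      Algebra.algebraMap_eq_smul_one, smul_apply, one_apply_eq_self, smul_sum]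
    refine sum_congr rfl fun n _ => ?_
    rw [smul_pow, smul_apply, ← Complex.exp_eq_exp_ℂ, smul_comm, ← Complex.coe_smul,
      smul_smul, smul_smul, smul_smul]
    congr 1
    push_cast
    ring
  have h := tendsto_finsetSum (range k) fun n _ =>
    (tendsto_cexp_mul_mul_pow_atTop hl n).smul_const ((n !⁻¹ : ℂ) • (N ^ n) y)
  simp only [zero_smul, sum_const_zero] at h
  exact h.congr fun t => (hexp t).symm

theorem mem_ker_of_mem_maxGenEigenspace {K M : Type*} [Field K] [AddCommGroup M] [Module K M]
    {f : End K M} {l : K} (hf : LinearMap.ker ((f - l • 1) ^ 2) = LinearMap.ker (f - l • 1))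
    {y : M} (hy : y ∈ f.maxGenEigenspace l) : (f - l • 1) y = 0 := by
  obtain ⟨k, hk⟩ := (End.mem_maxGenEigenspace _ _ _).mp hy
  have hconst := End.ker_pow_constant (f := f - l • 1) (k := 1) (by rw [pow_one, hf]) k
  rw [pow_one] at hconst
  have : y ∈ LinearMap.ker ((f - l • 1) ^ (1 + k)) := by
    rw [LinearMap.mem_ker, pow_add, pow_one, Module.End.mul_apply, hk, map_zero]
  rwa [← hconst] at this

section InnerProduct

variable {V : Type*} [NormedAddCommGroup V] [InnerProductSpace ℂ V] [CompleteSpace V]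

theorem inner_exp_smul_apply_of_adjoint_apply_eq_smul_s7 {T : V →L[ℂ] V} {u : V} {μ : ℂ}
    (hu : (T†) u = μ • u) (t : ℝ) (v : V) :
    ⟪u, exp (t • T) v⟫_ℂ = cexp (t * conj μ) * ⟪u, v⟫_ℂ := by
  have hexp : (exp (t • T))† = exp (t • T†) := by
    rw [← ContinuousLinearMap.star_eq_adjoint, star_exp, star_smul, star_trivial,
      ContinuousLinearMap.star_eq_adjoint]
  have heig : (t • T†) u = (t * μ) • u := by
    rw [smul_apply, hu, mul_smul, Complex.coe_smul]
  rw [← ContinuousLinearMap.adjoint_inner_left, hexp, exp_apply_of_apply_eq_smul_s7 heig,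
    inner_smul_left, ← Complex.exp_eq_exp_ℂ, ← Complex.exp_conj, map_mul, Complex.conj_ofReal]

theorem inner_eq_zero_of_tendsto_exp_smul_apply {T : V →L[ℂ] V} {u : V} {μ : ℂ}
    (hu : (T†) u = μ • u) (hμ : μ.re = 0) {x : V}
    (hx : Tendsto (fun t : ℝ => exp (t • T) x) atTop (𝓝 0)) : ⟪u, x⟫_ℂ = 0 := by
  have hlim : Tendsto (fun t : ℝ => ‖⟪u, exp (t • T) x⟫_ℂ‖) atTop (𝓝 0) := by
    simpa using ((tendsto_const_nhds (x := u)).inner (𝕜 := ℂ) hx).norm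
  have hconst (t : ℝ) : ‖⟪u, exp (t • T) x⟫_ℂ‖ = ‖⟪u, x⟫_ℂ‖ := by
    simp [inner_exp_smul_apply_of_adjoint_apply_eq_smul_s7 hu, Complex.norm_exp, hμ]
  simp only [hconst] at hlim
  exact norm_eq_zero.mp (tendsto_nhds_unique tendsto_const_nhds hlim)

theorem inner_eq_zero_of_mem_maxGenEigenspace {T : V →L[ℂ] V} {u : V} {μ l : ℂ}
    (hu : (T†) u = μ • u) (hne : conj μ ≠ l) {y : V}
    (hy : y ∈ End.maxGenEigenspace (T : V →ₗ[ℂ] V) l) : ⟪u, y⟫_ℂ = 0 := by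
  obtain ⟨k, hk⟩ := (End.mem_maxGenEigenspace _ _ _).mp hy
  have hpow (n : ℕ) (z : V) :
      ⟪u, (((T : V →ₗ[ℂ] V) - l • 1) ^ n) z⟫_ℂ = (conj μ - l) ^ n * ⟪u, z⟫_ℂ := by
    induction n generalizing z with
    | zero => simp
    | succ n ih =>
      rw [pow_succ, Module.End.mul_apply, ih, pow_succ, mul_assoc]
      congr 1
      simp [← ContinuousLinearMap.adjoint_inner_left, hu, inner_smul_left, sub_mul]
  have h := hpow k y
  rw [hk, inner_zero_right, eq_comm] at h
  exact (mul_eq_zero.mp h).resolve_left (pow_ne_zero _ (sub_ne_zero.mpr hne))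

end InnerProduct

section FiniteDimensional

variable {V : Type*} [NormedAddCommGroup V] [InnerProductSpace ℂ V] [FiniteDimensional ℂ V]

theorem eq_zero_of_apply_eq_smul_of_forall_inner_eq_zero {T : V →L[ℂ] V} {l : ℂ}
    (hsemi : LinearMap.ker (((T : V →ₗ[ℂ] V) - l • 1) ^ 2) =
      LinearMap.ker ((T : V →ₗ[ℂ] V) - l • 1))
    {y : V} (hy : ((T : V →ₗ[ℂ] V) - l • 1) y = 0)
    (horth : ∀ u, (T†) u = conj l • u → ⟪u, y⟫_ℂ = 0) : y = 0 := by
  set S : V →L[ℂ] V := T - l • 1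
  have hS : (S : V →ₗ[ℂ] V) = (T : V →ₗ[ℂ] V) - l • 1 := by ext; simp [S]
  have hrange : y ∈ S.range := by
    rw [← Submodule.orthogonal_orthogonal S.range, S.orthogonal_range]
    intro u hu
    refine horth u ?_
    simpa [S, sub_eq_zero, map_smulₛₗ, ContinuousLinearMap.adjoint_one] using hu
  obtain ⟨g, rfl⟩ := hrange
  have hg : g ∈ LinearMap.ker (((T : V →ₗ[ℂ] V) - l • 1) ^ 2) := by
    simpa [pow_two, ← hS] using hy
  rw [hsemi, ← hS] at hg
  exact hg

theorem tendsto_exp_smul_apply_of_forall_inner_eq_zero {T : V →L[ℂ] V}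
    (hspec : ∀ μ : ℂ, End.HasEigenvalue (T : V →ₗ[ℂ] V) μ → μ.re ≤ 0)
    (hsemi : ∀ μ : ℂ, μ.re = 0 →
      LinearMap.ker (((T : V →ₗ[ℂ] V) - μ • 1) ^ 2) = LinearMap.ker ((T : V →ₗ[ℂ] V) - μ • 1))
    {x : V} (hx : ∀ (μ : ℂ) (u : V), End.HasEigenvector ((T†) : V →ₗ[ℂ] V) μ u →
      μ.re = 0 → ⟪u, x⟫_ℂ = 0) :
    Tendsto (fun t : ℝ => exp (t • T) x) atTop (𝓝 0) := by
  obtain ⟨f, hf, rfl⟩ := (Submodule.mem_iSup_iff_exists_finsupp _ x).mp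
    (End.iSup_maxGenEigenspace_eq_top (T : V →ₗ[ℂ] V) ▸ Submodule.mem_top)
  have hcenter (l : ℂ) (hl : 0 ≤ l.re) : f l = 0 := by
    by_contra hne
    have heig : End.HasEigenvalue (T : V →ₗ[ℂ] V) l :=
      End.HasUnifEigenvalue.lt zero_lt_one ((Submodule.ne_bot_iff _).mpr ⟨f l, hf l, hne⟩)
    have hre : l.re = 0 := le_antisymm (hspec l heig) hl
    refine hne (eq_zero_of_apply_eq_smul_of_forall_inner_eq_zero (hsemi l hre)
      (mem_ker_of_mem_maxGenEigenspace (hsemi l hre) (hf l)) fun u hTu => ?_)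
    rcases eq_or_ne u 0 with rfl | hu0
    · exact inner_zero_left _
    have hother (l' : ℂ) (_ : l' ∈ f.support) (hl' : l' ≠ l) : ⟪u, f l'⟫_ℂ = 0 :=
      inner_eq_zero_of_mem_maxGenEigenspace hTu (by rwa [Complex.conj_conj, ne_comm]) (hf l')
    have h := hx (conj l) u ⟨End.mem_eigenspace_iff.mpr hTu, hu0⟩ (by simp [hre])
    rwa [Finsupp.sum, inner_sum, sum_eq_single l hother
      fun hl => by rw [Finsupp.notMem_support_iff.mp hl, inner_zero_right]] at h
  simp only [Finsupp.sum, map_sum]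
  simpa using tendsto_finsetSum f.support fun l hl =>
    tendsto_exp_smul_apply_of_mem_maxGenEigenspace
      (not_le.mp fun h => Finsupp.mem_support_iff.mp hl (hcenter l h)) (hf l)

end FiniteDimensional

/-- Necessary and sufficient condition for attraction: given `T` with eigenvalues of
nonpositive real part and no nontrivial Jordan blocks on the imaginary axis, and a fixed
point `w` of `T`, the trajectory `exp(tT) v₀` converges to `w` iff `v₀` and `w` have equal
pairings with every eigenvector of `T*` whose eigenvalue has zero real part. -/
theorem tendsto_iff_pairing
    {V : Type*} [NormedAddCommGroup V] [InnerProductSpace ℂ V] [FiniteDimensional ℂ V]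
    (T : V →L[ℂ] V)
    (hspec : ∀ μ : ℂ, Module.End.HasEigenvalue (T : V →ₗ[ℂ] V) μ → μ.re ≤ 0)
    (hsemi : ∀ μ : ℂ, μ.re = 0 →
      LinearMap.ker (((T : V →ₗ[ℂ] V) - μ • 1) ^ 2) = LinearMap.ker ((T : V →ₗ[ℂ] V) - μ • 1))
    (w : V) (hw : T w = 0) (v₀ : V) :
    Tendsto (fun t : ℝ => NormedSpace.exp (t • T) v₀) atTop (nhds w) ↔
      ∀ (μ : ℂ) (u : V), Module.End.HasEigenvector
          ((ContinuousLinearMap.adjoint T : V →L[ℂ] V) : V →ₗ[ℂ] V) μ u →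
        μ.re = 0 → (inner ℂ u v₀ : ℂ) = inner ℂ u w := by
  have hfix (t : ℝ) : exp (t • T) w = w :=
    exp_apply_of_apply_eq_zero (by rw [smul_apply, hw, smul_zero])
  have hshift : Tendsto (fun t : ℝ => exp (t • T) v₀) atTop (𝓝 w) ↔
      Tendsto (fun t : ℝ => exp (t • T) (v₀ - w)) atTop (𝓝 0) := by
    simp only [map_sub, hfix]
    exact tendsto_sub_nhds_zero_iff.symm
  simp only [hshift, ← sub_eq_zero (a := inner ℂ _ v₀), ← inner_sub_right]
  exact ⟨fun h μ u hu hμ => inner_eq_zero_of_tendsto_exp_smul_apply hu.apply_eq_smul hμ h,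
    tendsto_exp_smul_apply_of_forall_inner_eq_zero hspec hsemi⟩
end

section
/- If a Lindblad system admits two linearly independent steady states ρ_ss⁰ and ρ_ss¹, then for any steady state ρ_ss, the attraction domain DoA[ρ_ss] is contained in a proper affine subspace of the affine space D₁ of Hermitian trace-one matrices (namely ρ_ss + E_−, whose direction does not contain ρ_ss¹ − ρ_ss⁰), and hence has measure zero under the measure M₀ obtained by pushing forward Lebesgue measure through Gell-Mann coordinates. -/
open Matrix MeasureTheory Filter
open scoped ComplexOrder

attribute [local instance] Matrix.frobeniusNormedAddCommGroup Matrix.frobeniusNormedSpace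

variable {N : ℕ}

noncomputable local instance : MeasurableSpace (Matrix (Fin N) (Fin N) ℂ) := borel _
local instance : BorelSpace (Matrix (Fin N) (Fin N) ℂ) := ⟨rfl⟩

/-- The Lindblad generator as a linear map on `N × N` complex matrices. -/
noncomputable def lindbladLin {M : ℕ} (H0 : Matrix (Fin N) (Fin N) ℂ)
    (L : Fin M → Matrix (Fin N) (Fin N) ℂ) :
    Matrix (Fin N) (Fin N) ℂ →ₗ[ℂ] Matrix (Fin N) (Fin N) ℂ :=
  (-Complex.I) • (LinearMap.mulLeft ℂ H0 - LinearMap.mulRight ℂ H0) +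
    ∑ k : Fin M, ((LinearMap.mulRight ℂ (L k)ᴴ).comp (LinearMap.mulLeft ℂ (L k))
      - (1 / 2 : ℂ) • LinearMap.mulLeft ℂ ((L k)ᴴ * L k)
      - (1 / 2 : ℂ) • LinearMap.mulRight ℂ ((L k)ᴴ * L k))

/-- A density operator: positive semidefinite with trace one. -/
def IsDensityOp (ρ : Matrix (Fin N) (Fin N) ℂ) : Prop :=
  ρ.PosSemidef ∧ ρ.trace = 1

/-- The Gell-Mann coordinate parametrization: `a ↦ (1/N)·I + Σ_k (a_k/√2)·B_k`. -/
noncomputable def gellMannParam (B : Fin (N ^ 2 - 1) → Matrix (Fin N) (Fin N) ℂ)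
    (a : Fin (N ^ 2 - 1) → ℝ) : Matrix (Fin N) (Fin N) ℂ :=
  ((N : ℂ)⁻¹) • 1 + ∑ k, ((a k / Real.sqrt 2 : ℝ) : ℂ) • B k

/-! A difference of two distinct steady states is a nonzero vector in the kernel of the generator,
hence in its generalized eigenspace for `0`, which meets the sum of the generalized eigenspaces for
eigenvalues of negative real part only in `0`. So the attraction domain lies in the affine subspace
`ρss + (E₋ ∩ {Hermitian, traceless})`, whose direction misses `ρss¹ - ρss⁰`. The Gell-Mann
parametrization is affine and its linear part reaches every Hermitian traceless matrix, so the
preimage of that subspace is a proper affine subspace of coordinate space, hence Lebesgue-null. -/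

namespace Module.End

theorem notMem_biSup_maxGenEigenspace_of_mem_ker {K V : Type*} [Field K] [AddCommGroup V]
    [Module K V] (f : End K V) {S : Set K} (hS : 0 ∉ S) {x : V} (hx : f x = 0) (hx0 : x ≠ 0) :
    x ∉ ⨆ μ ∈ S, f.maxGenEigenspace μ := by
  have hker : x ∈ f.maxGenEigenspace 0 :=
    f.mem_maxGenEigenspace 0 x |>.mpr ⟨1, by simpa using hx⟩
  exact fun hS' => hx0 <| Submodule.disjoint_def.mp
    ((f.independent_maxGenEigenspace).disjoint_biSup hS) x hker hS'

end Module.End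

section HermTraceless

variable (n : Type*) [Fintype n]

def hermTraceless : Submodule ℝ (Matrix n n ℂ) where
  carrier := {A | A.IsHermitian ∧ A.trace = 0}
  add_mem' ha hb := ⟨ha.1.add hb.1, by rw [trace_add, ha.2, hb.2, add_zero]⟩
  zero_mem' := ⟨isHermitian_zero, trace_zero n ℂ⟩
  smul_mem' c _ hA := ⟨(IsSelfAdjoint.all c).smul hA.1, by rw [trace_smul, hA.2, smul_zero]⟩

variable {n}

theorem sub_mem_hermTraceless {A B : Matrix n n ℂ} (hA : A.IsHermitian) (hB : B.IsHermitian)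
    (hAtr : A.trace = 1) (hBtr : B.trace = 1) : A - B ∈ hermTraceless n :=
  ⟨hA.sub hB, by rw [trace_sub, hAtr, hBtr, sub_self]⟩

theorem isHermitian_add_of_mem_hermTraceless {A B : Matrix n n ℂ} (hA : A ∈ hermTraceless n)
    (hB : B.IsHermitian) (hBtr : B.trace = 1) : (A + B).IsHermitian ∧ (A + B).trace = 1 :=
  ⟨hA.1.add hB, by rw [trace_add, hA.2, hBtr, zero_add]⟩

end HermTraceless

theorem MeasureTheory.Measure.map_affineMap_affineSubspace_eq_zero {F E : Type*}
    [NormedAddCommGroup F] [NormedSpace ℝ F] [MeasurableSpace F] [BorelSpace F]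
    [FiniteDimensional ℝ F] (μ : Measure F) [μ.IsAddHaarMeasure]
    -- `E` is not normed: the Borel structure on matrices comes from the product topology,
    -- which is not reducibly the Frobenius one
    [AddCommGroup E] [Module ℝ E] [TopologicalSpace E] [IsTopologicalAddGroup E]
    [ContinuousSMul ℝ E] [T2Space E] [FiniteDimensional ℝ E] [MeasurableSpace E] [BorelSpace E]
    (g : F →ᵃ[ℝ] E) (W : AffineSubspace ℝ E) {v : E}
    (hv : v ∈ LinearMap.range g.linear) (hvW : v ∉ W.direction) : μ.map g W = 0 := by
  have hg : Continuous g :=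
    AffineMap.continuous_linear_iff.1 g.linear.continuous_of_finiteDimensional
  have hW : IsClosed (W : Set E) :=
    W.isClosed_direction_iff.1 W.direction.closed_of_finiteDimensional
  rw [Measure.map_apply hg.measurable hW.measurableSet, ← AffineSubspace.coe_comap]
  refine Measure.addHaar_affineSubspace μ _ fun htop => hvW ?_
  obtain ⟨x, rfl⟩ := hv
  have hmem (y : F) : g y ∈ W :=
    AffineSubspace.mem_comap.mp (htop ▸ AffineSubspace.mem_top ℝ F y)
  simpa only [← g.linearMap_vsub, vsub_eq_sub, sub_zero] using
    AffineSubspace.vsub_mem_direction (hmem x) (hmem 0)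

noncomputable def gellMannAffine (B : Fin (N ^ 2 - 1) → Matrix (Fin N) (Fin N) ℂ) :
    (Fin (N ^ 2 - 1) → ℝ) →ᵃ[ℝ] Matrix (Fin N) (Fin N) ℂ where
  toFun := gellMannParam B
  linear := Fintype.linearCombination ℝ fun k => (Real.sqrt 2)⁻¹ • B k
  map_vadd' a v := by
    simp only [gellMannParam, vadd_eq_add, Pi.add_apply, Fintype.linearCombination_apply,
      Complex.coe_smul, smul_smul, div_eq_mul_inv, add_mul, add_smul, Finset.sum_add_distrib]
    abel

theorem coe_gellMannAffine (B : Fin (N ^ 2 - 1) → Matrix (Fin N) (Fin N) ℂ) :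
    ⇑(gellMannAffine B) = gellMannParam B :=
  rfl

theorem span_le_range_gellMannAffine_linear (B : Fin (N ^ 2 - 1) → Matrix (Fin N) (Fin N) ℂ) :
    Submodule.span ℝ (Set.range B) ≤ LinearMap.range (gellMannAffine B).linear := by
  change _ ≤ LinearMap.range (Fintype.linearCombination ℝ _)
  rw [Fintype.range_linearCombination, Submodule.span_le]
  rintro _ ⟨k, rfl⟩
  have hB : B k = Real.sqrt 2 • ((Real.sqrt 2)⁻¹ • B k) := by
    rw [smul_smul, mul_inv_cancel₀ (by positivity), one_smul]
  rw [hB]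
  exact Submodule.smul_mem _ _ (Submodule.subset_span ⟨k, rfl⟩)

theorem doa_measure_zero_general {M : ℕ}
    (H0 : Matrix (Fin N) (Fin N) ℂ)
    (L : Fin M → Matrix (Fin N) (Fin N) ℂ)
    (ρss0 ρss1 : Matrix (Fin N) (Fin N) ℂ)
    (h0 : IsDensityOp ρss0 ∧ lindbladLin H0 L ρss0 = 0)
    (h1 : IsDensityOp ρss1 ∧ lindbladLin H0 L ρss1 = 0)
    (hindep : LinearIndependent ℂ ![ρss0, ρss1])
    (ρss : Matrix (Fin N) (Fin N) ℂ)
    (hss : IsDensityOp ρss ∧ lindbladLin H0 L ρss = 0)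
    (Eneg : Submodule ℂ (Matrix (Fin N) (Fin N) ℂ))
    (hE : Eneg = ⨆ μ ∈ {μ : ℂ | μ.re < 0},
      Module.End.maxGenEigenspace (lindbladLin H0 L) μ)
    (B : Fin (N ^ 2 - 1) → Matrix (Fin N) (Fin N) ℂ)
    (hspan : ∀ A : Matrix (Fin N) (Fin N) ℂ, A.IsHermitian → A.trace = 0 →
      A ∈ Submodule.span ℝ (Set.range B))
    (M₀ : Measure (Matrix (Fin N) (Fin N) ℂ))
    (hM₀ : M₀ = (volume : Measure (Fin (N ^ 2 - 1) → ℝ)).map (gellMannParam B)) :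
    (∃ W : AffineSubspace ℝ (Matrix (Fin N) (Fin N) ℂ),
      {ρ | IsDensityOp ρ ∧ ρ - ρss ∈ Eneg} ⊆ (W : Set _) ∧
      (W : Set _) ⊆ {A : Matrix (Fin N) (Fin N) ℂ | A.IsHermitian ∧ A.trace = 1} ∧
      ρss1 - ρss0 ∉ W.direction) ∧
    M₀ {ρ | IsDensityOp ρ ∧ ρ - ρss ∈ Eneg} = 0 := by
  have hδ0 : ρss1 - ρss0 ≠ 0 :=
    sub_ne_zero.2 fun h => hindep.injective.ne (by decide : (1 : Fin 2) ≠ 0) (by simpa using h)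
  have hδE : ρss1 - ρss0 ∉ Eneg := hE ▸
    Module.End.notMem_biSup_maxGenEigenspace_of_mem_ker _ (by simp)
      (by rw [map_sub, h1.2, h0.2, sub_zero]) hδ0
  have hδ : ρss1 - ρss0 ∈ hermTraceless (Fin N) :=
    sub_mem_hermTraceless h1.1.1.isHermitian h0.1.1.isHermitian h1.1.2 h0.1.2
  let W := AffineSubspace.mk' ρss (Eneg.restrictScalars ℝ ⊓ hermTraceless (Fin N))
  have hδW : ρss1 - ρss0 ∉ W.direction := by
    rw [AffineSubspace.direction_mk']
    exact fun h => hδE h.1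
  have hDoA : {ρ | IsDensityOp ρ ∧ ρ - ρss ∈ Eneg} ⊆ (W : Set _) :=
    fun ρ ⟨⟨hpos, htr⟩, hmem⟩ => AffineSubspace.mem_mk'.2
      ⟨hmem, sub_mem_hermTraceless hpos.isHermitian hss.1.1.isHermitian htr hss.1.2⟩
  have hW : (W : Set _) ⊆ {A : Matrix (Fin N) (Fin N) ℂ | A.IsHermitian ∧ A.trace = 1} :=
    fun A hA => by
      simpa using isHermitian_add_of_mem_hermTraceless (AffineSubspace.mem_mk'.1 hA).2
        hss.1.1.isHermitian hss.1.2
  refine ⟨⟨W, hDoA, hW, hδW⟩, measure_mono_null hDoA ?_⟩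
  rw [hM₀, ← coe_gellMannAffine]
  exact Measure.map_affineMap_affineSubspace_eq_zero volume (gellMannAffine B) W
    (span_le_range_gellMannAffine_linear B (hspan _ hδ.1 hδ.2)) hδW

/-- If a Lindblad system admits two linearly independent steady states, then the attraction
domain `(ρss + E₋) ∩ D(H)` of any steady state `ρss` is contained in a proper affine
subspace of the Hermitian trace-one matrices (whose direction misses `ρss¹ − ρss⁰`), and
hence is null for the pushforward `M₀` of Lebesgue measure under Gell-Mann coordinates. -/
theorem doa_measure_zero {M : ℕ} (hN : 1 ≤ N)
    (H0 : Matrix (Fin N) (Fin N) ℂ) (hH0 : H0.IsHermitian)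
    (L : Fin M → Matrix (Fin N) (Fin N) ℂ)
    (ρss0 ρss1 : Matrix (Fin N) (Fin N) ℂ)
    (h0 : IsDensityOp ρss0 ∧ lindbladLin H0 L ρss0 = 0)
    (h1 : IsDensityOp ρss1 ∧ lindbladLin H0 L ρss1 = 0)
    (hindep : LinearIndependent ℂ ![ρss0, ρss1])
    (ρss : Matrix (Fin N) (Fin N) ℂ)
    (hss : IsDensityOp ρss ∧ lindbladLin H0 L ρss = 0)
    (Eneg : Submodule ℂ (Matrix (Fin N) (Fin N) ℂ))
    (hE : Eneg = ⨆ μ ∈ {μ : ℂ | μ.re < 0},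
      Module.End.maxGenEigenspace (lindbladLin H0 L) μ)
    (B : Fin (N ^ 2 - 1) → Matrix (Fin N) (Fin N) ℂ)
    (hHerm : ∀ k, (B k).IsHermitian) (htraceless : ∀ k, (B k).trace = 0)
    (horth : ∀ i j, (B i * B j).trace = if i = j then 2 else 0)
    (hspan : ∀ A : Matrix (Fin N) (Fin N) ℂ, A.IsHermitian → A.trace = 0 →
      A ∈ Submodule.span ℝ (Set.range B))
    (M₀ : Measure (Matrix (Fin N) (Fin N) ℂ))
    (hM₀ : M₀ = (volume : Measure (Fin (N ^ 2 - 1) → ℝ)).map (gellMannParam B)) :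
    (∃ W : AffineSubspace ℝ (Matrix (Fin N) (Fin N) ℂ),
      {ρ | IsDensityOp ρ ∧ ρ - ρss ∈ Eneg} ⊆ (W : Set _) ∧
      (W : Set _) ⊆ {A : Matrix (Fin N) (Fin N) ℂ | A.IsHermitian ∧ A.trace = 1} ∧
      ρss1 - ρss0 ∉ W.direction) ∧
    M₀ {ρ | IsDensityOp ρ ∧ ρ - ρss ∈ Eneg} = 0 :=
  doa_measure_zero_general H0 L ρss0 ρss1 h0 h1 hindep ρss hss Eneg hE B hspan M₀ hM₀
end
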